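/- For α > 1, the sum Σ_{r≥1} (A/r^α)·(ρ_α r^α)/(ρ_α r^α + B^α) is asymptotic to A ρ_α / B^{α−1} as B → ∞, where B^α = Σ_{j=1}^ℓ C_j^α; i.e., the averaged global miss probability of the tandem RND network satisfies M(ℓ) ~ A ρ_α (Σ_{j=1}^ℓ C_j^α)^{1/α − 1}. -/

import Mathlib

open Real Filter
open MeasureTheory Set

lemma lem_beta {s : ℝ} (h0 : 0 < s) (h1 : s < 1) :
    ∫ x in Ioo (0:ℝ) 1, x ^ (s-1) * (1-x) ^ (-s) = π / Real.sin (π * s) := by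
  have key : Complex.Gamma s * Complex.Gamma (1 - s)
      = Complex.Gamma (s + (1 - s)) * Complex.betaIntegral s (1 - s) :=
    Complex.Gamma_mul_Gamma_eq_betaIntegral (by simpa using h0) (by simp [Complex.sub_re]; linarith)
  rw [show (s:ℂ) + (1 - s) = 1 by ring, Complex.Gamma_one, one_mul] at key
  have hbeta : Complex.betaIntegral s (1 - s)
      = ((∫ x in (0:ℝ)..1, x ^ (s-1) * (1-x) ^ (-s) : ℝ) : ℂ) := by
    rw [Complex.betaIntegral, ← intervalIntegral.integral_ofReal]
    refine intervalIntegral.integral_congr fun x hx => ?_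
    rw [uIcc_of_le zero_le_one] at hx
    push_cast
    rw [Complex.ofReal_cpow hx.1, Complex.ofReal_cpow (by linarith [hx.2] : (0:ℝ) ≤ 1 - x)]
    push_cast
    ring_nf
  have hreal : Real.Gamma s * Real.Gamma (1 - s)
      = ∫ x in (0:ℝ)..1, x ^ (s-1) * (1-x) ^ (-s) := by
    have := key
    rw [hbeta, ← Complex.ofReal_one, ← Complex.ofReal_sub, Complex.Gamma_ofReal,
      Complex.Gamma_ofReal, ← Complex.ofReal_mul] at this
    exact_mod_cast this
  rw [← MeasureTheory.integral_Ioc_eq_integral_Ioo, ← intervalIntegral.integral_of_le zero_le_one,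
    ← hreal, Real.Gamma_mul_Gamma_one_sub]

lemma lem_mellin {s : ℝ} (h0 : 0 < s) (h1 : s < 1) :
    ∫ x in Ioi (0:ℝ), x ^ (s-1) / (1+x) = π / Real.sin (π * s) := by
  have hderiv : ∀ x ∈ Ioi (0:ℝ), HasDerivWithinAt (fun x : ℝ => x / (1+x))
      (((1+x)^2)⁻¹) (Ioi 0) x := by
    intro x hx
    have h1x : (1:ℝ) + x ≠ 0 := by have := mem_Ioi.mp hx; positivity
    have : HasDerivAt (fun x : ℝ => x / (1+x)) ((1*(1+x) - x*1)/((1+x)^2)) x :=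
      (hasDerivAt_id x).div ((hasDerivAt_id x).const_add 1) h1x
    exact this.hasDerivWithinAt.congr_deriv (by ring)
  have hinj : InjOn (fun x : ℝ => x / (1+x)) (Ioi 0) := by
    intro x hx y hy hxy
    have hx' : (0:ℝ) < x := hx
    have hy' : (0:ℝ) < y := hy
    have h1 : (1:ℝ) + x ≠ 0 := by positivity
    have h2 : (1:ℝ) + y ≠ 0 := by positivity
    field_simp at hxy
    linarith
  have himg : (fun x : ℝ => x / (1+x)) '' (Ioi 0) = Ioo 0 1 := by
    ext y
    simp only [mem_image, mem_Ioi, mem_Ioo]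
    constructor
    · rintro ⟨x, hx, rfl⟩
      have h1 : (0:ℝ) < 1 + x := by linarith
      exact ⟨by positivity, by rw [div_lt_one h1]; linarith⟩
    · rintro ⟨hy0, hy1⟩
      have h1y : (0:ℝ) < 1 - y := by linarith
      refine ⟨y / (1-y), div_pos hy0 h1y, ?_⟩
      have h1 : (1:ℝ) - y ≠ 0 := h1y.ne'
      field_simp
      ring
  have key := MeasureTheory.integral_image_eq_integral_abs_deriv_smul measurableSet_Ioi hderiv hinj
    (fun y => y ^ (s-1) * (1-y) ^ (-s))
  rw [himg, lem_beta h0 h1] at key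
  rw [key]
  refine setIntegral_congr_fun measurableSet_Ioi fun x hx => ?_
  have hx' : (0:ℝ) < x := hx
  have h1x : (0:ℝ) < 1 + x := by linarith
  have e1 : (1:ℝ) - x / (1+x) = (1+x)⁻¹ := by field_simp; ring
  rw [smul_eq_mul, abs_of_nonneg (by positivity), e1, Real.div_rpow hx'.le h1x.le,
    Real.inv_rpow h1x.le, Real.rpow_neg h1x.le s, inv_inv]
  have e2 : ((1+x)^2)⁻¹ * (x ^ (s-1) / (1+x) ^ (s-1) * (1+x) ^ s)
      = x ^ (s-1) * (((1+x)^(2:ℝ))⁻¹ * ((1+x) ^ (s-1))⁻¹ * (1+x) ^ s) := by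
    rw [Real.rpow_two]; ring
  rw [e2, ← Real.rpow_neg h1x.le, ← Real.rpow_neg h1x.le, ← Real.rpow_add h1x,
    ← Real.rpow_add h1x]
  have : (-2 + -(s - 1) + s : ℝ) = -1 := by ring
  rw [this, Real.rpow_neg_one]
  ring

lemma lem_J {α : ℝ} (hα : 1 < α) :
    ∫ t in Ioi (0:ℝ), (1 + t ^ α)⁻¹ = π / α / Real.sin (π / α) := by
  have hα0 : (0:ℝ) < α := by linarith
  have hs0 : 0 < 1/α := by positivity
  have hs1 : 1/α < 1 := by rw [div_lt_one hα0]; linarith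
  have key := MeasureTheory.integral_comp_rpow_Ioi_of_pos
    (g := fun y : ℝ => α⁻¹ * (y ^ (1/α - 1) / (1 + y))) hα0
  have congr1 : ∫ x in Ioi (0:ℝ), (α * x ^ (α - 1)) •
      (α⁻¹ * ((x ^ α) ^ (1/α - 1) / (1 + x ^ α))) = ∫ t in Ioi (0:ℝ), (1 + t ^ α)⁻¹ := by
    refine setIntegral_congr_fun measurableSet_Ioi fun x hx => ?_
    have hx' : (0:ℝ) < x := hx
    have e1 : (x ^ α) ^ (1/α - 1) = x ^ (1 - α) := by
      rw [← Real.rpow_mul hx'.le]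
      congr 1
      field_simp
    rw [smul_eq_mul, e1]
    have e2 : x ^ (α - 1) * x ^ (1 - α) = 1 := by
      rw [← Real.rpow_add hx']; norm_num

    calc α * x ^ (α - 1) * (α⁻¹ * (x ^ (1-α) / (1 + x ^ α)))
        = (α * α⁻¹) * (x ^ (α-1) * x ^ (1-α)) / (1 + x ^ α) := by ring
      _ = (1 + x ^ α)⁻¹ := by rw [e2, mul_inv_cancel₀ hα0.ne']; simp [one_div]
  rw [congr1] at key
  rw [key, MeasureTheory.integral_const_mul, lem_mellin hs0 hs1]
  rw [mul_comm π (1/α)]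
  field_simp

lemma lem_J_int {α : ℝ} (hα : 1 < α) :
    IntegrableOn (fun t : ℝ => (1 + t ^ α)⁻¹) (Ioi 0) := by
  have hα0 : (0:ℝ) < α := by linarith
  have hcont : ∀ t : ℝ, 0 ≤ t → ContinuousAt (fun t : ℝ => (1 + t ^ α)⁻¹) t := by
    intro t ht
    have h1 : ContinuousAt (fun t : ℝ => t ^ α) t :=
      Real.continuousAt_rpow_const t α (Or.inr hα0.le)
    have h2 : (1:ℝ) + t ^ α ≠ 0 := by
      have := Real.rpow_nonneg ht α; positivity
    exact ((continuousAt_const.add h1).inv₀ h2)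
  have hIcc : IntegrableOn (fun t : ℝ => (1 + t ^ α)⁻¹) (Icc 0 1) := by
    apply ContinuousOn.integrableOn_Icc
    exact fun t ht => (hcont t ht.1).continuousWithinAt
  have hIoi : IntegrableOn (fun t : ℝ => (1 + t ^ α)⁻¹) (Ioi 1) := by
    have hbase : IntegrableOn (fun t : ℝ => t ^ (-α)) (Ioi 1) :=
      integrableOn_Ioi_rpow_of_lt (by linarith) one_pos
    refine Integrable.mono hbase ?_ ?_
    · exact ((continuousOn_of_forall_continuousAt (fun t ht =>
        hcont t (by linarith [mem_Ioi.mp ht]))).aestronglyMeasurable measurableSet_Ioi)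
    · filter_upwards [ae_restrict_mem measurableSet_Ioi] with t ht
      have ht' : (0:ℝ) < t := by linarith [mem_Ioi.mp ht]
      have h1 : (0:ℝ) < t ^ α := Real.rpow_pos_of_pos ht' α
      rw [Real.norm_eq_abs, Real.norm_eq_abs, abs_of_nonneg (by positivity),
        abs_of_nonneg (Real.rpow_nonneg ht'.le _), Real.rpow_neg ht'.le]
      exact inv_anti₀ h1 (by linarith)
  exact ((hIcc.union hIoi).mono_set (by
    intro t ht
    rcases le_or_gt t 1 with h | h
    · exact Or.inl ⟨le_of_lt ht, h⟩
    · exact Or.inr h))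

lemma hUnion1 : (⋃ r : ℕ, Ioc ((r:ℝ)) (r+1)) = Ioi 0 := by
  ext t
  simp only [mem_iUnion, mem_Ioc, mem_Ioi]
  constructor
  · rintro ⟨r, h1, h2⟩
    have : (0:ℝ) ≤ r := Nat.cast_nonneg r
    linarith
  · intro ht
    have h1 : 1 ≤ ⌈t⌉₊ := Nat.one_le_iff_ne_zero.mpr (by
      simpa using (Nat.ceil_pos.mpr ht).ne')
    refine ⟨⌈t⌉₊ - 1, ?_, ?_⟩
    · have h2 : (⌈t⌉₊ : ℝ) < t + 1 := Nat.ceil_lt_add_one ht.le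
      have h3 : ((⌈t⌉₊ - 1 : ℕ) : ℝ) = (⌈t⌉₊ : ℝ) - 1 := by
        push_cast [Nat.cast_sub h1]; ring
      rw [h3]; linarith
    · have h3 : ((⌈t⌉₊ - 1 : ℕ) : ℝ) = (⌈t⌉₊ : ℝ) - 1 := by
        push_cast [Nat.cast_sub h1]; ring
      rw [h3]
      have := Nat.le_ceil t
      linarith

lemma hUnion2 : (⋃ r : ℕ, Ioc ((r:ℝ)+1) (r+2)) = Ioi 1 := by
  ext t
  simp only [mem_iUnion, mem_Ioc, mem_Ioi]
  constructor
  · rintro ⟨r, h1, h2⟩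
    have : (0:ℝ) ≤ r := Nat.cast_nonneg r
    linarith
  · intro ht
    have h1 : 2 ≤ ⌈t⌉₊ := by
      have : (1:ℝ) < ⌈t⌉₊ := lt_of_lt_of_le ht (Nat.le_ceil t)
      exact_mod_cast Nat.lt_iff_add_one_le.mp (by exact_mod_cast this)
    refine ⟨⌈t⌉₊ - 2, ?_, ?_⟩
    · have h2 : (⌈t⌉₊ : ℝ) < t + 1 := Nat.ceil_lt_add_one (by linarith)
      have h3 : ((⌈t⌉₊ - 2 : ℕ) : ℝ) = (⌈t⌉₊ : ℝ) - 2 := by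
        push_cast [Nat.cast_sub h1]; ring
      rw [h3]; linarith
    · have h3 : ((⌈t⌉₊ - 2 : ℕ) : ℝ) = (⌈t⌉₊ : ℝ) - 2 := by
        push_cast [Nat.cast_sub h1]; ring
      rw [h3]
      have := Nat.le_ceil t
      linarith

lemma hDisj1 : Pairwise (Function.onFun Disjoint fun r : ℕ => Ioc ((r:ℝ)) (r+1)) := by
  intro i j hij
  simp only [Function.onFun]
  rw [Set.Ioc_disjoint_Ioc]
  rcases hij.lt_or_gt with h | h
  · have : (i:ℝ) + 1 ≤ j := by exact_mod_cast Nat.succ_le_of_lt h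
    exact le_trans (min_le_left _ _) (le_trans this (le_max_right _ _))
  · have : (j:ℝ) + 1 ≤ i := by exact_mod_cast Nat.succ_le_of_lt h
    exact le_trans (min_le_right _ _) (le_trans this (le_max_left _ _))

lemma hDisj2 : Pairwise (Function.onFun Disjoint fun r : ℕ => Ioc ((r:ℝ)+1) (r+2)) := by
  intro i j hij
  simp only [Function.onFun]
  rw [Set.Ioc_disjoint_Ioc]
  rcases hij.lt_or_gt with h | h
  · have : (i:ℝ) + 1 ≤ j := by exact_mod_cast Nat.succ_le_of_lt h
    exact le_trans (min_le_left _ _) (le_trans (by linarith) (le_max_right _ _))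
  · have : (j:ℝ) + 1 ≤ i := by exact_mod_cast Nat.succ_le_of_lt h
    exact le_trans (min_le_right _ _) (le_trans (by linarith) (le_max_left _ _))

lemma int_val {α A ρ : ℝ} (hα : 1 < α) (hρ : 0 < ρ)
    (hJ : ∫ t in Ioi (0:ℝ), (1 + t ^ α)⁻¹ = ρ ^ (1/α)) {B : ℝ} (hB : 0 < B) :
    IntegrableOn (fun t : ℝ => A * ρ / (ρ * t ^ α + B ^ α)) (Ioi 0) ∧
    ∫ t in Ioi (0:ℝ), A * ρ / (ρ * t ^ α + B ^ α) = A * ρ * B ^ (1-α) := by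
  have hα0 : (0:ℝ) < α := by linarith
  set c : ℝ := ρ ^ (1/α) with hc
  have hc0 : 0 < c := Real.rpow_pos_of_pos hρ _
  set b : ℝ := c / B with hbdef
  have hb : 0 < b := div_pos hc0 hB
  have hBα : (0:ℝ) < B ^ α := Real.rpow_pos_of_pos hB α
  have hbα : b ^ α = ρ / B ^ α := by
    rw [hbdef, Real.div_rpow hc0.le hB.le, hc, ← Real.rpow_mul hρ.le]
    rw [one_div_mul_cancel hα0.ne', Real.rpow_one]
  have hpt : ∀ t ∈ Ioi (0:ℝ),
      A * ρ / (ρ * t ^ α + B ^ α) = (A * ρ / B ^ α) * (1 + (b * t) ^ α)⁻¹ := by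
    intro t ht
    have ht' : (0:ℝ) < t := ht
    rw [Real.mul_rpow hb.le ht'.le, hbα]
    have htα : (0:ℝ) ≤ t ^ α := Real.rpow_nonneg ht'.le α
    have hd1 : ρ * t ^ α + B ^ α ≠ 0 := by positivity
    have hd2 : (1:ℝ) + ρ / B ^ α * t ^ α ≠ 0 := by positivity
    field_simp
    ring_nf
  have hcomp : IntegrableOn (fun t : ℝ => (1 + (b * t) ^ α)⁻¹) (Ioi 0) := by
    have := (integrableOn_Ioi_comp_mul_left_iff (fun t : ℝ => (1 + t ^ α)⁻¹) 0 hb).mpr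
      (by rw [mul_zero]; exact lem_J_int hα)
    exact this
  have hint : IntegrableOn (fun t : ℝ => A * ρ / (ρ * t ^ α + B ^ α)) (Ioi 0) := by
    refine (IntegrableOn.congr_fun (hcomp.const_mul (A * ρ / B ^ α)) ?_ measurableSet_Ioi)
    intro t ht
    exact (hpt t ht).symm
  refine ⟨hint, ?_⟩
  rw [setIntegral_congr_fun measurableSet_Ioi hpt, MeasureTheory.integral_const_mul]
  have hsub := MeasureTheory.integral_comp_mul_left_Ioi (fun t : ℝ => (1 + t ^ α)⁻¹) 0 hb
  rw [mul_zero, hJ, smul_eq_mul] at hsub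
  rw [hsub, hbdef]
  rw [inv_div, Real.rpow_sub hB, Real.rpow_one]
  rw [div_mul_cancel₀ _ hc0.ne']
  field_simp

lemma sum_bounds {α A ρ : ℝ} (hα : 1 < α) (hA : 0 < A) (hρ : 0 < ρ) {B : ℝ} (hB : 0 < B)
    (hint : IntegrableOn (fun t : ℝ => A * ρ / (ρ * t ^ α + B ^ α)) (Ioi 0)) :
    (∫ t in Ioi (0:ℝ), A * ρ / (ρ * t ^ α + B ^ α)) - A * ρ / B ^ α
      ≤ (∑' r : ℕ, A * ρ / (ρ * ((r:ℝ) + 1) ^ α + B ^ α)) ∧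
    (∑' r : ℕ, A * ρ / (ρ * ((r:ℝ) + 1) ^ α + B ^ α))
      ≤ ∫ t in Ioi (0:ℝ), A * ρ / (ρ * t ^ α + B ^ α) := by
  have hα0 : (0:ℝ) < α := by linarith
  set g : ℝ → ℝ := fun t => A * ρ / (ρ * t ^ α + B ^ α) with hg
  have hBα : (0:ℝ) < B ^ α := Real.rpow_pos_of_pos hB α
  have hden : ∀ t : ℝ, 0 ≤ t → 0 < ρ * t ^ α + B ^ α := by
    intro t ht
    have := Real.rpow_nonneg ht α
    positivity
  have hgpos : ∀ t : ℝ, 0 ≤ t → 0 ≤ g t := fun t ht =>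
    div_nonneg (by positivity) (hden t ht).le
  have hanti : AntitoneOn g (Ici 0) := by
    intro x hx y hy hxy
    have hx' : (0:ℝ) ≤ x := hx
    have hy' : (0:ℝ) ≤ y := hy
    apply div_le_div_of_nonneg_left (by positivity) (hden x hx')
    have : x ^ α ≤ y ^ α := Real.rpow_le_rpow hx' hxy hα0.le
    nlinarith
  -- hasSum of integrals over Ioc r (r+1)
  have hU : HasSum (fun r : ℕ => ∫ t in Ioc ((r:ℝ)) (r+1), g t) (∫ t in Ioi (0:ℝ), g t) := by
    have := MeasureTheory.hasSum_integral_iUnion (μ := volume) (f := g)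
      (s := fun r : ℕ => Ioc ((r:ℝ)) (r+1)) (fun r => measurableSet_Ioc) hDisj1
      (by rw [hUnion1]; exact hint)
    rwa [hUnion1] at this
  have hL : HasSum (fun r : ℕ => ∫ t in Ioc ((r:ℝ)+1) (r+2), g t) (∫ t in Ioi (1:ℝ), g t) := by
    have := MeasureTheory.hasSum_integral_iUnion (μ := volume) (f := g)
      (s := fun r : ℕ => Ioc ((r:ℝ)+1) (r+2)) (fun r => measurableSet_Ioc) hDisj2
      (by rw [hUnion2]; exact hint.mono_set (Ioi_subset_Ioi zero_le_one))
    rwa [hUnion2] at this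
  have hvol : ∀ a : ℝ, volume.real (Ioc a (a+1)) = 1 := by
    intro a; rw [Real.volume_real_Ioc]; norm_num
  -- termwise: g (r+1) ≤ ∫_{Ioc r (r+1)} g
  have hterm_le : ∀ r : ℕ, g ((r:ℝ)+1) ≤ ∫ t in Ioc ((r:ℝ)) (r+1), g t := by
    intro r
    have h0r : (0:ℝ) ≤ (r:ℝ) := Nat.cast_nonneg r
    calc g ((r:ℝ)+1) = ∫ _ in Ioc ((r:ℝ)) (r+1), g ((r:ℝ)+1) := by
          rw [setIntegral_const, hvol, one_smul]
      _ ≤ ∫ t in Ioc ((r:ℝ)) (r+1), g t := by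
          refine setIntegral_mono_on (integrableOn_const measure_Ioc_lt_top.ne)
            (hint.mono_set (fun t ht => lt_of_le_of_lt h0r ht.1)) measurableSet_Ioc
            fun t ht => ?_
          exact hanti (le_trans h0r ht.1.le) (by linarith : (0:ℝ) ≤ (r:ℝ)+1) ht.2
  have hterm_ge : ∀ r : ℕ, (∫ t in Ioc ((r:ℝ)+1) (r+2), g t) ≤ g ((r:ℝ)+1) := by
    intro r
    have h0r : (0:ℝ) ≤ (r:ℝ) := Nat.cast_nonneg r
    calc (∫ t in Ioc ((r:ℝ)+1) (r+2), g t)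
        ≤ ∫ _ in Ioc ((r:ℝ)+1) (r+2), g ((r:ℝ)+1) := by
          refine setIntegral_mono_on
            (hint.mono_set (fun t ht => lt_of_le_of_lt (by linarith) ht.1))
            (integrableOn_const measure_Ioc_lt_top.ne) measurableSet_Ioc
            fun t ht => ?_
          exact hanti (by linarith : (0:ℝ) ≤ (r:ℝ)+1) (le_trans (by linarith) ht.1.le) ht.1.le
      _ = g ((r:ℝ)+1) := by
          have : ((r:ℝ)+2) = ((r:ℝ)+1) + 1 := by ring
          rw [this, setIntegral_const, hvol, one_smul]
  have hsummable : Summable (fun r : ℕ => g ((r:ℝ)+1)) :=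
    Summable.of_nonneg_of_le (fun r => hgpos _ (by positivity)) hterm_le hU.summable
  constructor
  · have h1 : (∫ t in Ioi (1:ℝ), g t) ≤ ∑' r : ℕ, g ((r:ℝ)+1) := by
      rw [← hL.tsum_eq]
      exact Summable.tsum_le_tsum hterm_ge hL.summable hsummable
    have h2 : (∫ t in Ioi (0:ℝ), g t) - A * ρ / B ^ α ≤ ∫ t in Ioi (1:ℝ), g t := by
      have hsplit : (∫ t in Ioi (0:ℝ), g t)
          = (∫ t in Ioc (0:ℝ) 1, g t) + ∫ t in Ioi (1:ℝ), g t := by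
        rw [← Ioc_union_Ioi_eq_Ioi (zero_le_one : (0:ℝ) ≤ 1)]
        exact setIntegral_union Ioc_disjoint_Ioi_same measurableSet_Ioi
          (hint.mono_set (fun t ht => ht.1))
          (hint.mono_set (Ioi_subset_Ioi zero_le_one))
      have hsmall : (∫ t in Ioc (0:ℝ) 1, g t) ≤ A * ρ / B ^ α := by
        calc (∫ t in Ioc (0:ℝ) 1, g t) ≤ ∫ _ in Ioc (0:ℝ) 1, A * ρ / B ^ α := by
              refine setIntegral_mono_on (hint.mono_set (fun t ht => ht.1))
                (integrableOn_const measure_Ioc_lt_top.ne) measurableSet_Ioc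
                fun t ht => ?_
              apply div_le_div_of_nonneg_left (by positivity) hBα
              have := Real.rpow_nonneg ht.1.le α
              nlinarith
          _ = A * ρ / B ^ α := by
              rw [setIntegral_const]
              norm_num [Real.volume_Ioc, Real.volume_real_Ioc]
      linarith
    exact le_trans h2 h1
  · rw [← hU.tsum_eq]
    exact Summable.tsum_le_tsum hterm_le hsummable hU.summable

/-- For `α > 1`, the averaged global miss probability of the tandem RND network,
`S(B) = ∑_{r≥1} (A/r^α)·ρ_α r^α/(ρ_α r^α + B^α)`, satisfies
`S(B)·B^{α-1} → A ρ_α` as `B → ∞`, i.e. `M(ℓ) ~ A ρ_α (∑_j C_j^α)^{1/α-1}`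
with `B^α = ∑_{j=1}^ℓ C_j^α`. -/
theorem stmt19 (α A ρ : ℝ) (hα : 1 < α) (hA : 0 < A)
    (hρ : ρ = (π / α / Real.sin (π / α)) ^ α) :
    Tendsto
      (fun B : ℝ => (∑' r : ℕ, A * ρ / (ρ * ((r : ℝ) + 1) ^ α + B ^ α)) * B ^ (α - 1))
      atTop (nhds (A * ρ)) := by
  have hα0 : (0:ℝ) < α := by linarith
  have hsin : 0 < Real.sin (π / α) :=
    Real.sin_pos_of_pos_of_lt_pi (by positivity) (div_lt_self pi_pos hα)
  have hcpos : 0 < π / α / Real.sin (π / α) := by positivity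
  have hρ0 : 0 < ρ := hρ ▸ Real.rpow_pos_of_pos hcpos α
  have hJ : ∫ t in Ioi (0:ℝ), (1 + t ^ α)⁻¹ = ρ ^ (1/α) := by
    rw [lem_J hα, hρ, ← Real.rpow_mul hcpos.le, mul_one_div_cancel hα0.ne', Real.rpow_one]
  have hlow : Tendsto (fun B : ℝ => A * ρ - A * ρ * B⁻¹) atTop (nhds (A * ρ)) := by
    have := (tendsto_inv_atTop_zero (𝕜 := ℝ)).const_mul (A * ρ)
    have h2 := (tendsto_const_nhds (α := ℝ) (x := A * ρ) (f := atTop)).sub this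
    simpa using h2
  refine tendsto_of_tendsto_of_tendsto_of_le_of_le' hlow tendsto_const_nhds ?_ ?_
  · filter_upwards [eventually_gt_atTop (0:ℝ)] with B hB
    obtain ⟨hint, hval⟩ := int_val (A := A) hα hρ0 hJ hB
    obtain ⟨hlo, -⟩ := sum_bounds hα hA hρ0 hB hint
    rw [hval] at hlo
    have hpow : (0:ℝ) ≤ B ^ (α-1) := Real.rpow_nonneg hB.le _
    have e0 : B ^ (1-α) * B ^ (α-1) = 1 := by
      rw [← Real.rpow_add hB]; norm_num
    have e1 : (B ^ α)⁻¹ * B ^ (α-1) = B⁻¹ := by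
      rw [← Real.rpow_neg hB.le, ← Real.rpow_add hB]
      have : -α + (α-1) = (-1:ℝ) := by ring
      rw [this, Real.rpow_neg_one]
    calc A * ρ - A * ρ * B⁻¹
        = (A * ρ * B ^ (1-α) - A * ρ / B ^ α) * B ^ (α-1) := by
          have expand : (A * ρ * B ^ (1-α) - A * ρ / B ^ α) * B ^ (α-1)
              = A * ρ * (B ^ (1-α) * B ^ (α-1)) - A * ρ * ((B ^ α)⁻¹ * B ^ (α-1)) := by
            ring
          rw [expand, e0, e1, mul_one]
      _ ≤ _ := mul_le_mul_of_nonneg_right hlo hpow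
  · filter_upwards [eventually_gt_atTop (0:ℝ)] with B hB
    obtain ⟨hint, hval⟩ := int_val (A := A) hα hρ0 hJ hB
    obtain ⟨-, hhi⟩ := sum_bounds hα hA hρ0 hB hint
    rw [hval] at hhi
    have hpow : (0:ℝ) ≤ B ^ (α-1) := Real.rpow_nonneg hB.le _
    have e0 : B ^ (1-α) * B ^ (α-1) = 1 := by
      rw [← Real.rpow_add hB]; norm_num
    calc (∑' r : ℕ, A * ρ / (ρ * ((r : ℝ) + 1) ^ α + B ^ α)) * B ^ (α - 1)
        ≤ A * ρ * B ^ (1-α) * B ^ (α-1) := mul_le_mul_of_nonneg_right hhi hpow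
      _ = A * ρ := by rw [mul_assoc, e0, mul_one]
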